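/- arXiv:2105.03064 — 2 statements merged into one kernel-verified Lean document; each statement's English description precedes it below -/
import Mathlib

section
/- If det P ≠ 0, then for every k ∈ [n], ∑_{j=1}^{k} (f([j:n],{k}) − ℓ_{j−1,s})·μ_j = (ℓ_{k,s} − ℓ_{k−1,s})·μ_{k+1}. -/
open Finset
open Fin.NatCast

/-- The η×η shift-type block `D^{η−m}` over GF(2): entry (i,j) is 1 iff
`j < m` and `i = j + (η − m)`. -/
def Dblk (η m : ℕ) : Matrix (Fin η) (Fin η) (ZMod 2) :=
  Matrix.of fun i j => if (j : ℕ) < m ∧ (i : ℕ) = (j : ℕ) + (η - m) then 1 else 0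

/-- Row-block index set of the transfer matrix: `{d} ∪ (Ωᶜ ∩ Sᶜ)`, with `0`
playing the role of the destination `d` and relays being `1,…,n`. -/
def rowIdx (n : ℕ) (Ω S : Finset ℕ) : Finset ℕ :=
  insert 0 ((Finset.Icc 1 n \ Ω) \ S)

/-- Column-block index set of the transfer matrix: `{s} ∪ (Ω ∩ S)`, with `0`
playing the role of the source `s`. -/
def colIdx (Ω S : Finset ℕ) : Finset ℕ :=
  insert 0 (Ω ∩ S)

/-- `f(Ω,S)`: rank over GF(2) of the transfer matrix `F_{Ω,S}`, whose block in
row block `i` and column block `j` is `D^{η−ℓ i j}` (here `ℓ i j` encodes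
`ℓ_{i,j}`, with index `0` standing for `d` in the first slot and for `s` in the
second slot). -/
noncomputable def fRank (n η : ℕ) (ℓ : ℕ → ℕ → ℕ) (Ω S : Finset ℕ) : ℕ :=
  Matrix.rank
    (Matrix.of fun (p : ↥(rowIdx n Ω S) × Fin η) (q : ↥(colIdx Ω S) × Fin η) =>
      Dblk η (ℓ (p.1 : ℕ) (q.1 : ℕ)) p.2 q.2)

/-- The `(n+2) × (n+2)` real matrix `P`. -/
noncomputable def Pmat (n η : ℕ) (ℓ : ℕ → ℕ → ℕ) : Matrix (Fin (n+2)) (Fin (n+2)) ℝ :=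
  Matrix.of fun i j =>
    if (i : ℕ) = 0 then (if (j : ℕ) = 0 then 0 else 1)
    else if (j : ℕ) = 0 then 1
    else -(fRank n η ℓ (Finset.Icc (i : ℕ) n)
        (if (j : ℕ) = n + 1 then (∅ : Finset ℕ) else {(j : ℕ)}) : ℝ)

/-- `P̃_i`: determinant of the submatrix of `P` obtained by deleting row `0`
and column `i`. -/
noncomputable def Pminor (n η : ℕ) (ℓ : ℕ → ℕ → ℕ) (i : Fin (n+2)) : ℝ :=
  ((Pmat n η ℓ).submatrix Fin.succ i.succAbove).det

/-- Feasibility for the LP defining the approximate capacity `C^LD`. -/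
def FeasLD (n η : ℕ) (ℓ : ℕ → ℕ → ℕ) (t : ℝ) (lam : Finset ℕ → ℝ) : Prop :=
  (∀ S ⊆ Finset.Icc 1 n, 0 ≤ lam S) ∧
  (∑ S ∈ (Finset.Icc 1 n).powerset, lam S) ≤ 1 ∧
  ∀ Ω ⊆ Finset.Icc 1 n,
    t ≤ ∑ S ∈ (Finset.Icc 1 n).powerset, lam S * (fRank n η ℓ Ω S : ℝ)

/-- The approximate capacity `C^LD`. -/
noncomputable def CLD (n η : ℕ) (ℓ : ℕ → ℕ → ℕ) : ℝ :=
  sSup {t : ℝ | ∃ lam, FeasLD n η ℓ t lam}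

/-- Feasibility for the relaxed LP defining `C^U`. -/
def FeasU (n η : ℕ) (ℓ : ℕ → ℕ → ℕ) (t : ℝ) (lam : Finset ℕ → ℝ) : Prop :=
  (∀ S ⊆ Finset.Icc 1 n, 0 ≤ lam S) ∧
  (∑ S ∈ (Finset.Icc 1 n).powerset, lam S) ≤ 1 ∧
  ∀ i ∈ Finset.Icc 1 (n+1),
    t ≤ ∑ S ∈ (Finset.Icc 1 n).powerset, lam S * (fRank n η ℓ (Finset.Icc i n) S : ℝ)

/-- The relaxed value `C^U`. -/
noncomputable def CU (n η : ℕ) (ℓ : ℕ → ℕ → ℕ) : ℝ :=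
  sSup {t : ℝ | ∃ lam, FeasU n η ℓ t lam}

/-- The set `Ŝ = {∅, {1}, …, {n}}` of states with at most one relay transmitting. -/
def SHat (n : ℕ) : Finset (Finset ℕ) :=
  insert ∅ ((Finset.Icc 1 n).image fun i => {i})

/-- The schedule `λ*` induced by a solution vector `v = (t*, λ*_{{1}}, …, λ*_{{n}}, λ*_∅)`
of the linear system `P·v = e₀`: it assigns `v i` to the state `{i}` (for `i ∈ [n]`),
`v (n+1)` to `∅`, and `0` to any other state. -/
noncomputable def lamStar (n : ℕ) (v : Fin (n+2) → ℝ) (S : Finset ℕ) : ℝ :=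
  (if S = ∅ then v (Fin.last (n+1)) else 0) +
  ∑ i ∈ Finset.Icc 1 n, if S = {i} then v (i : Fin (n+2)) else 0

/-!
For a cut `Ω = [j:n]` disjoint from the state `S`, the transfer matrix has the single column
block `s`, a stack of shifted identities `D^{η-ℓ_{i,s}}`, so its rank is the largest `ℓ_{i,s}`
over its row blocks. By monotonicity this is `ℓ_{j-1,s}`, except for `S = {k}` and `j = k+1`,
where row block `k` is missing and the rank drops to `ℓ_{k-1,s}`. Hence the columns `{k}` and `∅`
of `μ P = e₀` agree term by term beyond `j = k+1`, and subtracting them gives the identity.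
-/

theorem rank_dblk_column_eq_sup {R C : Type*} [Fintype R] [Fintype C] [Nonempty C] (η : ℕ)
    (m : R → ℕ) (hm : ∀ i, m i ≤ η) :
    (Matrix.of fun (p : R × Fin η) (q : C × Fin η) => Dblk η (m p.1) p.2 q.2).rank =
      univ.sup m := by
  classical
  set A := Matrix.of fun (p : R × Fin η) (q : C × Fin η) => Dblk η (m p.1) p.2 q.2
  set M := univ.sup m
  have hmM : ∀ i, m i ≤ M := fun i => le_sup (mem_univ i)
  have hMη : M ≤ η := Finset.sup_le fun i _ => hm i
  let c0 : C := Classical.arbitrary C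
  apply le_antisymm
  · -- the column `(c, j)` of `A` depends only on `j` and vanishes for `j ≥ M`
    let N : Matrix (R × Fin η) (Fin M) (ZMod 2) := A.submatrix id fun j => (c0, Fin.castLE hMη j)
    let E : Matrix (Fin M) (C × Fin η) (ZMod 2) :=
      Matrix.of fun j q => if (q.2 : ℕ) = j then 1 else 0
    have hfactor : A = N * E := by
      ext p q
      by_cases hq : (q.2 : ℕ) < M
      · rw [Matrix.mul_apply, Fintype.sum_eq_single ⟨q.2, hq⟩]
        · simp [N, E, A, Dblk]
        · intro j hj
          have : (q.2 : ℕ) ≠ j := fun h => hj (Fin.ext h.symm)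
          simp [E, this]
      · have hA : A p q = 0 := by
          simp only [A, Dblk, Matrix.of_apply, ite_eq_right_iff, and_imp]
          intro h; have := hmM p.1; omega
        rw [hA, Matrix.mul_apply, Fintype.sum_eq_zero]
        intro j
        have : (q.2 : ℕ) ≠ j := by omega
        simp [E, this]
    calc A.rank = (N * E).rank := by rw [hfactor]
      _ ≤ N.rank := Matrix.rank_mul_le_left N E
      _ ≤ Fintype.card (Fin M) := Matrix.rank_le_card_width N
      _ = M := Fintype.card_fin M
  · rcases isEmpty_or_nonempty R with _ | _
    · simp [M]
    obtain ⟨i0, -, hi0⟩ := exists_mem_eq_sup univ univ_nonempty m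
    have hid : A.submatrix (fun a : Fin M => (i0, ⟨a + (η - M), by omega⟩))
        (fun b => (c0, Fin.castLE hMη b)) = 1 := by
      ext a b
      simp only [A, Dblk, Matrix.submatrix_apply, Matrix.of_apply, Matrix.one_apply,
        Fin.val_castLE, Fin.ext_iff, ← hi0]
      split_ifs <;> first | rfl | (exfalso; omega)
    calc M = (1 : Matrix (Fin M) (Fin M) (ZMod 2)).rank := by simp
      _ ≤ A.rank := hid ▸ Matrix.rank_submatrix_le A _ _

section fRank

variable {n η : ℕ} {ℓ : ℕ → ℕ → ℕ}

theorem fRank_of_disjoint {Ω S : Finset ℕ} (hΩS : Disjoint Ω S)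
    (hbound : ∀ i ∈ rowIdx n Ω S, ℓ i 0 ≤ η) :
    fRank n η ℓ Ω S = (rowIdx n Ω S).sup (ℓ · 0) := by
  have hcol : colIdx Ω S = {0} := by rw [colIdx, disjoint_iff_inter_eq_empty.1 hΩS]; rfl
  have : Nonempty ↥(colIdx Ω S) := ⟨⟨0, mem_insert_self _ _⟩⟩
  have hq : ∀ q : ↥(colIdx Ω S), (q : ℕ) = 0 := fun q => by simpa [hcol] using q.2
  simp only [fRank, hq]
  rw [rank_dblk_column_eq_sup η (fun i : ↥(rowIdx n Ω S) => ℓ i 0) fun i => hbound i i.2,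
    univ_eq_attach]
  exact sup_attach (rowIdx n Ω S) (ℓ · 0)

theorem fRank_eq_of_rowIdx_subset {Ω S : Finset ℕ} (hΩS : Disjoint Ω S) {i₀ : ℕ}
    (hi₀ : i₀ ∈ rowIdx n Ω S) (hsub : rowIdx n Ω S ⊆ insert 0 (Icc 1 i₀))
    (hbound : ℓ i₀ 0 ≤ η) (hds : ℓ 0 0 = 0)
    (hmono : ∀ i, 1 ≤ i → i ≤ i₀ → ℓ i 0 ≤ ℓ i₀ 0) :
    fRank n η ℓ Ω S = ℓ i₀ 0 := by
  have hle : ∀ i ∈ rowIdx n Ω S, ℓ i 0 ≤ ℓ i₀ 0 := fun i hi => by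
    rcases mem_insert.1 (hsub hi) with rfl | hi
    · exact hds.trans_le (Nat.zero_le _)
    · exact hmono i (mem_Icc.1 hi).1 (mem_Icc.1 hi).2
  rw [fRank_of_disjoint hΩS fun i hi => (hle i hi).trans hbound]
  exact le_antisymm (Finset.sup_le hle) (le_sup (f := (ℓ · 0)) hi₀)

theorem fRank_Icc_of_disjoint (hbound : ∀ i ≤ n, ℓ i 0 ≤ η) (hds : ℓ 0 0 = 0)
    (hmono : ∀ i j, 1 ≤ i → i ≤ j → j ≤ n → ℓ i 0 ≤ ℓ j 0) {j : ℕ} (hj : j ∈ Icc 1 (n + 1))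
    {S : Finset ℕ} (hS : Disjoint (Icc j n) S) (hjS : j - 1 ∉ S) :
    fRank n η ℓ (Icc j n) S = ℓ (j - 1) 0 := by
  rw [mem_Icc] at hj
  refine fRank_eq_of_rowIdx_subset hS ?_ ?_ (hbound _ (by omega)) hds
    fun i hi hij => hmono i (j - 1) hi hij (by omega)
  · simp only [rowIdx, mem_insert, mem_sdiff, mem_Icc, hjS, not_false_eq_true, and_true]
    omega
  · intro i
    simp only [rowIdx, mem_insert, mem_sdiff, mem_Icc]
    omega

theorem fRank_Icc_succ_singleton (hbound : ∀ i ≤ n, ℓ i 0 ≤ η) (hds : ℓ 0 0 = 0)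
    (hmono : ∀ i j, 1 ≤ i → i ≤ j → j ≤ n → ℓ i 0 ≤ ℓ j 0) {k : ℕ} (hk : k ∈ Icc 1 n) :
    fRank n η ℓ (Icc (k + 1) n) {k} = ℓ (k - 1) 0 := by
  rw [mem_Icc] at hk
  refine fRank_eq_of_rowIdx_subset ?_ ?_ ?_ (hbound _ (by omega)) hds
    fun i hi hik => hmono i (k - 1) hi hik (by omega)
  · simp
  · simp only [rowIdx, mem_insert, mem_sdiff, mem_Icc, mem_singleton]
    omega
  · intro i
    simp only [rowIdx, mem_insert, mem_sdiff, mem_Icc, mem_singleton]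
    omega

theorem sum_mul_fRank_eq_of_vecMul_Pmat {μ : Fin (n + 2) → ℝ}
    (hμ : Matrix.vecMul μ (Pmat n η ℓ) = fun k => if k = 0 then 1 else 0)
    {c : ℕ} (hc : c ∈ Icc 1 (n + 1)) :
    ∑ i ∈ Icc 1 (n + 1),
      μ i * (fRank n η ℓ (Icc i n) (if c = n + 1 then ∅ else {c}) : ℝ) = μ 0 := by
  rw [mem_Icc] at hc
  have hcval : ((c : Fin (n + 2)) : ℕ) = c := Fin.val_cast_of_lt (by omega)
  have hcol : ∑ i ∈ range (n + 2), μ i * Pmat n η ℓ i c = 0 := by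
    have h := congrFun hμ c
    have hc0 : (c : Fin (n + 2)) ≠ 0 := fun h => by simp [← Fin.val_inj, hcval] at h; omega
    simp only [hc0, if_false, Matrix.vecMul, dotProduct] at h
    rw [← h, ← Fin.sum_univ_eq_sum_range (fun i => μ i * Pmat n η ℓ i c)]
    simp only [Fin.cast_val_eq_self]
  have hrange : range (n + 2) = insert 0 (Icc 1 (n + 1)) := by
    ext; simp only [mem_range, mem_insert, mem_Icc]; omega
  have hP0 : Pmat n η ℓ 0 c = 1 := by
    simp only [Pmat, Matrix.of_apply, Fin.val_zero, hcval]
    rw [if_pos trivial, if_neg (by omega)]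
  have hP : ∀ i ∈ Icc 1 (n + 1), Pmat n η ℓ i c =
      -(fRank n η ℓ (Icc i n) (if c = n + 1 then ∅ else {c}) : ℝ) := fun i hi => by
    have hival : ((i : Fin (n + 2)) : ℕ) = i := Fin.val_cast_of_lt (by grind)
    simp only [Pmat, Matrix.of_apply, hival, hcval]
    rw [if_neg (by grind), if_neg (by omega)]
  rw [hrange, sum_insert (by simp), Nat.cast_zero, hP0, sum_congr rfl fun i hi => by
    rw [hP i hi]] at hcol
  simp only [mul_neg, sum_neg_distrib] at hcol
  linarith

theorem sum_fRank_sub_mul_eq_zero {μ : Fin (n + 2) → ℝ}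
    (hbound : ∀ i ≤ n, ℓ i 0 ≤ η) (hds : ℓ 0 0 = 0)
    (hmono : ∀ i j, 1 ≤ i → i ≤ j → j ≤ n → ℓ i 0 ≤ ℓ j 0)
    (hμ : Matrix.vecMul μ (Pmat n η ℓ) = fun k => if k = 0 then 1 else 0)
    {k : ℕ} (hk : k ∈ Icc 1 n) :
    ∑ j ∈ Icc 1 (n + 1), ((fRank n η ℓ (Icc j n) {k} : ℝ) - ℓ (j - 1) 0) * μ j = 0 := by
  rw [mem_Icc] at hk
  have hcolk := sum_mul_fRank_eq_of_vecMul_Pmat hμ (c := k) (mem_Icc.2 ⟨hk.1, by omega⟩)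
  have hcolEmpty := sum_mul_fRank_eq_of_vecMul_Pmat hμ (c := n + 1) (by simp)
  rw [if_neg (by omega)] at hcolk
  rw [if_pos rfl, sum_congr rfl fun j hj => by
    rw [fRank_Icc_of_disjoint hbound hds hmono hj (disjoint_empty_right _) (notMem_empty _)]]
    at hcolEmpty
  calc ∑ j ∈ Icc 1 (n + 1), ((fRank n η ℓ (Icc j n) {k} : ℝ) - ℓ (j - 1) 0) * μ j
      = ∑ j ∈ Icc 1 (n + 1), μ j * (fRank n η ℓ (Icc j n) {k} : ℝ)
        - ∑ j ∈ Icc 1 (n + 1), μ j * (ℓ (j - 1) 0 : ℝ) := by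
        rw [← sum_sub_distrib]; exact sum_congr rfl fun j _ => by ring
    _ = 0 := by rw [hcolk, hcolEmpty, sub_self]

end fRank

theorem stmt16_general (n η : ℕ) (ℓ : ℕ → ℕ → ℕ)
    (hbound : ∀ i ≤ n, ∀ j ≤ n, ℓ i j ≤ η)
    (hds : ℓ 0 0 = 0)
    (hmono : ∀ i j, 1 ≤ i → i ≤ j → j ≤ n → ℓ i 0 ≤ ℓ j 0)
    (μ : Fin (n + 2) → ℝ)
    (hμ : Matrix.vecMul μ (Pmat n η ℓ) = fun k => if k = 0 then 1 else 0) :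
    ∀ k ∈ Finset.Icc 1 n,
      ∑ j ∈ Finset.Icc 1 k,
          ((fRank n η ℓ (Finset.Icc j n) {k} : ℝ) - (ℓ (j - 1) 0 : ℝ)) * μ (j : Fin (n + 2))
        = ((ℓ k 0 : ℝ) - (ℓ (k - 1) 0 : ℝ)) * μ ((k + 1 : ℕ) : Fin (n + 2)) := by
  intro k hk
  have hk' := mem_Icc.1 hk
  have hbound₀ : ∀ i ≤ n, ℓ i 0 ≤ η := fun i hi => hbound i hi 0 (Nat.zero_le n)
  have hsum := sum_fRank_sub_mul_eq_zero hbound₀ hds hmono hμ hk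
  set g : ℕ → ℝ := fun j => ((fRank n η ℓ (Icc j n) {k} : ℝ) - ℓ (j - 1) 0) * μ j
  have htail : ∑ j ∈ Icc 1 (n + 1), g j = ∑ j ∈ Icc 1 (k + 1), g j := by
    refine (sum_subset (Icc_subset_Icc_right (by omega)) fun j hj hjk => ?_).symm
    simp only [mem_Icc] at hj hjk
    have hdisj : Disjoint (Icc j n) {k} :=
      disjoint_singleton_right.2 (by simp only [mem_Icc]; omega)
    simp only [g, fRank_Icc_of_disjoint hbound₀ hds hmono (mem_Icc.2 hj) hdisj
      (by simp only [mem_singleton]; omega), sub_self, zero_mul]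
  rw [htail, sum_Icc_succ_top (by omega), add_eq_zero_iff_eq_neg] at hsum
  simp only [hsum, g]
  rw [fRank_Icc_succ_singleton hbound₀ hds hmono hk, Nat.add_sub_cancel]
  ring

theorem stmt16 (n η : ℕ) (hn : 1 ≤ n) (hη : 1 ≤ η) (ℓ : ℕ → ℕ → ℕ)
    (hbound : ∀ i ≤ n, ∀ j ≤ n, ℓ i j ≤ η)
    (hds : ℓ 0 0 = 0) (hii : ∀ i, 1 ≤ i → i ≤ n → ℓ i i = 0)
    (hmono : ∀ i j, 1 ≤ i → i ≤ j → j ≤ n → ℓ i 0 ≤ ℓ j 0)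
    (hdet : (Pmat n η ℓ).det ≠ 0)
    (μ : Fin (n + 2) → ℝ)
    (hμ : Matrix.vecMul μ (Pmat n η ℓ) = fun k => if k = 0 then 1 else 0) :
    ∀ k ∈ Finset.Icc 1 n,
      ∑ j ∈ Finset.Icc 1 k,
          ((fRank n η ℓ (Finset.Icc j n) {k} : ℝ) - (ℓ (j - 1) 0 : ℝ)) * μ (j : Fin (n + 2))
        = ((ℓ k 0 : ℝ) - (ℓ (k - 1) 0 : ℝ)) * μ ((k + 1 : ℕ) : Fin (n + 2)) :=
  stmt16_general n η ℓ hbound hds hmono μ hμ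
end

section
/- If j ∈ [n] satisfies ℓ_{j,s} = ℓ_{j−1,s} = f([j:n],{j}), then f([i:n],{j}) = ℓ_{i−1,s} = f([i:n],∅) for every i ∈ {1,…,n+1} (with [n+1:n] = ∅); in particular, the j-th and (n+1)-th columns of P coincide. -/
open Finset
open Fin.NatCast

/-!
A block column of `D`-blocks has rank equal to its largest `ℓ` (at most `η`): its first
`ℓ` columns contain an identity matrix and the others vanish. Since the source gains are
nondecreasing and `ℓ_{d,s} = 0`, the source column of `F_{[i:n],S}` therefore has rank
`ℓ_{i-1,s}` whenever relay `i - 1` (or `d`), or a relay of equal gain, is among its rows; for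
`S = {j}` and `i = j + 1` relay `j - 1` takes this role, thanks to `ℓ_{j,s} = ℓ_{j-1,s}`.
For `S = ∅` and for `j < i` the source column is all of `F_{[i:n],S}`. For `i ≤ j`, the
hypothesis `f([j:n],{j}) = ℓ_{j-1,s}` says that the columns of `F_{[j:n],{j}}` lie in the
span of its source column; `F_{[i:n],{j}}` is obtained from it by deleting rows, which
preserves this.
-/

open Submodule Matrix in
theorem Matrix.rank_submatrix_eq_of_rank_submatrix_cols_eq {K ρ ρ' γ γ' : Type*} [Field K]
    [Fintype ρ] [Fintype γ] [Fintype γ'] (A : Matrix ρ γ K) (f : ρ' → ρ) (g : γ' → γ)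
    (h : (A.submatrix id g).rank = A.rank) :
    (A.submatrix f g).rank = (A.submatrix f id).rank := by
  rw [rank_eq_finrank_span_cols, rank_eq_finrank_span_cols] at h ⊢
  have hspan : span K (Set.range (A.submatrix id g).col) = span K (Set.range A.col) :=
    eq_of_le_of_finrank_eq (span_mono fun _ ⟨c, hc⟩ => ⟨g c, hc⟩) h
  set F := LinearMap.funLeft K K f
  calc Module.finrank K (span K (Set.range (A.submatrix f g).col))
      = Module.finrank K ((span K (Set.range (A.submatrix id g).col)).map F) := by
        rw [map_span, ← Set.range_comp]; rfl
    _ = Module.finrank K ((span K (Set.range A.col)).map F) := by rw [hspan]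
    _ = Module.finrank K (span K (Set.range (A.submatrix f id).col)) := by
        rw [map_span, ← Set.range_comp]; rfl

def transferMatrix (η : ℕ) (ℓ : ℕ → ℕ → ℕ) (R C : Finset ℕ) :
    Matrix (R × Fin η) (C × Fin η) (ZMod 2) :=
  Matrix.of fun p q => Dblk η (ℓ p.1 q.1) p.2 q.2

section TransferMatrix

open Matrix

variable {η : ℕ} {ℓ : ℕ → ℕ → ℕ} {R C : Finset ℕ}

theorem fRank_eq_rank_transferMatrix (n : ℕ) (Ω S : Finset ℕ) :
    fRank n η ℓ Ω S = (transferMatrix η ℓ (rowIdx n Ω S) (colIdx Ω S)).rank := rfl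

theorem le_rank_transferMatrix {r c : ℕ} (hr : r ∈ R) (hc : c ∈ C) (hη : ℓ r c ≤ η) :
    ℓ r c ≤ (transferMatrix η ℓ R C).rank := by
  -- the block `D^{η-ℓ r c}` in position `(r, c)` contains an identity matrix of size `ℓ r c`
  have hid : (transferMatrix η ℓ R C).submatrix
      (fun q : Fin (ℓ r c) => (⟨r, hr⟩, ⟨q + (η - ℓ r c), by omega⟩))
      (fun q : Fin (ℓ r c) => (⟨c, hc⟩, Fin.castLE hη q)) = 1 := by
    ext q q'
    simp [transferMatrix, Dblk, Matrix.one_apply, Fin.ext_iff]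
  calc ℓ r c = (1 : Matrix (Fin (ℓ r c)) (Fin (ℓ r c)) (ZMod 2)).rank := by simp
    _ ≤ _ := hid ▸ Matrix.rank_submatrix_le _ _ _

theorem rank_transferMatrix_singleton_le {c m : ℕ} (hub : ∀ r ∈ R, ℓ r c ≤ m) (hm : m ≤ η) :
    (transferMatrix η ℓ R {c}).rank ≤ m := by
  set A := transferMatrix η ℓ R {c}
  -- only the first `m` columns of the block column are nonzero
  have hsupp : Function.support Aᵀ.row ⊆ (Finset.univ.image fun q : Fin m =>
      ((⟨c, Finset.mem_singleton_self c⟩ : ({c} : Finset ℕ)), Fin.castLE hm q) : Set _) := by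
    rintro ⟨⟨c', hc'⟩, q⟩ hq
    obtain rfl := Finset.mem_singleton.1 hc'
    by_contra hqm
    refine hq (funext fun p => if_neg fun h => hqm ?_)
    have : (q : ℕ) < m := h.1.trans_le (hub p.1 p.1.2)
    exact Finset.mem_coe.2 (Finset.mem_image.2 ⟨⟨q, this⟩, Finset.mem_univ _, rfl⟩)
  calc A.rank = Aᵀ.rank := (Matrix.rank_transpose A).symm
    _ ≤ _ := Matrix.rank_le_card_of_support_subset _ _ hsupp
    _ ≤ m := Finset.card_image_le.trans (by simp)

theorem rank_transferMatrix_singleton {c m : ℕ} (hub : ∀ r ∈ R, ℓ r c ≤ m)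
    (hex : ∃ r ∈ R, ℓ r c = m) (hm : m ≤ η) : (transferMatrix η ℓ R {c}).rank = m := by
  obtain ⟨r, hr, rfl⟩ := hex
  exact (rank_transferMatrix_singleton_le hub hm).antisymm
    (le_rank_transferMatrix hr (Finset.mem_singleton_self c) hm)

theorem rank_transferMatrix_eq_of_subset {R' : Finset ℕ} {c : ℕ} (hR : R ⊆ R') (hc : c ∈ C)
    (h : (transferMatrix η ℓ R' C).rank = (transferMatrix η ℓ R' {c}).rank) :
    (transferMatrix η ℓ R C).rank = (transferMatrix η ℓ R {c}).rank :=
  ((transferMatrix η ℓ R' C).rank_submatrix_eq_of_rank_submatrix_cols_eq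
    (Prod.map (fun r : R => (⟨r, hR r.2⟩ : R')) id)
    (Prod.map (fun c' : ({c} : Finset ℕ) => (⟨c', Finset.singleton_subset_iff.2 hc c'.2⟩ : C)) id)
    h.symm).symm

end TransferMatrix

section Relays

variable {n η : ℕ} {ℓ : ℕ → ℕ → ℕ}

theorem mem_rowIdx_Icc {i r : ℕ} {S : Finset ℕ} :
    r ∈ rowIdx n (Icc i n) S ↔ r = 0 ∨ (1 ≤ r ∧ r < i ∧ r ≤ n ∧ r ∉ S) := by
  by_cases hrS : r ∈ S
  · simp [rowIdx, hrS]
  · simp [rowIdx, hrS]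
    omega

theorem mem_rowIdx_Icc_of_lt {i r : ℕ} {S : Finset ℕ} (hri : r < i) (hrn : r ≤ n)
    (hrS : r ∉ S) : r ∈ rowIdx n (Icc i n) S :=
  mem_rowIdx_Icc.2 ((Nat.eq_zero_or_pos r).imp id fun hr => ⟨hr, hri, hrn, hrS⟩)

theorem rank_transferMatrix_rowIdx_source (hds : ℓ 0 0 = 0)
    (hmono : ∀ i j, 1 ≤ i → i ≤ j → j ≤ n → ℓ i 0 ≤ ℓ j 0) {i : ℕ} {S : Finset ℕ}
    (hin : i ≤ n + 1) (hη : ℓ (i - 1) 0 ≤ η)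
    (hwit : ∃ r ∈ rowIdx n (Icc i n) S, ℓ r 0 = ℓ (i - 1) 0) :
    (transferMatrix η ℓ (rowIdx n (Icc i n) S) {0}).rank = ℓ (i - 1) 0 := by
  refine rank_transferMatrix_singleton (fun r hr => ?_) hwit hη
  rcases mem_rowIdx_Icc.1 hr with rfl | ⟨hr1, hri, -, -⟩
  · simp [hds]
  · exact hmono r (i - 1) hr1 (by omega) (by omega)

theorem fRank_Icc_eq_of_colIdx_eq (hds : ℓ 0 0 = 0)
    (hmono : ∀ i j, 1 ≤ i → i ≤ j → j ≤ n → ℓ i 0 ≤ ℓ j 0) {i : ℕ} {S : Finset ℕ}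
    (hin : i ≤ n + 1) (hη : ℓ (i - 1) 0 ≤ η) (hS : colIdx (Icc i n) S = {0})
    (hwit : ∃ r ∈ rowIdx n (Icc i n) S, ℓ r 0 = ℓ (i - 1) 0) :
    fRank n η ℓ (Icc i n) S = ℓ (i - 1) 0 := by
  rw [fRank_eq_rank_transferMatrix, hS]
  exact rank_transferMatrix_rowIdx_source hds hmono hin hη hwit

theorem fRank_Icc_empty (hds : ℓ 0 0 = 0)
    (hmono : ∀ i j, 1 ≤ i → i ≤ j → j ≤ n → ℓ i 0 ≤ ℓ j 0) {i : ℕ} (hi : 1 ≤ i)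
    (hin : i ≤ n + 1) (hη : ℓ (i - 1) 0 ≤ η) :
    fRank n η ℓ (Icc i n) ∅ = ℓ (i - 1) 0 :=
  fRank_Icc_eq_of_colIdx_eq hds hmono hin hη (by simp [colIdx])
    ⟨i - 1, mem_rowIdx_Icc_of_lt (by omega) (by omega) (notMem_empty _), rfl⟩

theorem exists_mem_rowIdx_singleton_source {j : ℕ} (hj1 : 1 ≤ j)
    (h1 : ℓ j 0 = ℓ (j - 1) 0) {i : ℕ} (hi : 1 ≤ i) (hin : i ≤ n + 1) :
    ∃ r ∈ rowIdx n (Icc i n) {j}, ℓ r 0 = ℓ (i - 1) 0 := by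
  by_cases hij : i - 1 = j
  · exact ⟨j - 1, mem_rowIdx_Icc_of_lt (by omega) (by omega) (by simp; omega), by rw [hij, h1]⟩
  · exact ⟨i - 1, mem_rowIdx_Icc_of_lt (by omega) (by omega) (by simpa using hij), rfl⟩

theorem fRank_Icc_singleton (hds : ℓ 0 0 = 0)
    (hmono : ∀ i j, 1 ≤ i → i ≤ j → j ≤ n → ℓ i 0 ≤ ℓ j 0)
    (hbound : ∀ i ≤ n, ℓ i 0 ≤ η) {j : ℕ} (hj1 : 1 ≤ j) (hjn : j ≤ n)
    (h1 : ℓ j 0 = ℓ (j - 1) 0) (h2 : ℓ (j - 1) 0 = fRank n η ℓ (Icc j n) {j})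
    {i : ℕ} (hi : 1 ≤ i) (hin : i ≤ n + 1) :
    fRank n η ℓ (Icc i n) {j} = ℓ (i - 1) 0 := by
  have hwit {i} (hi : 1 ≤ i) (hin : i ≤ n + 1) :=
    exists_mem_rowIdx_singleton_source (n := n) hj1 h1 hi hin
  rcases lt_or_ge j i with hji | hij
  · exact fRank_Icc_eq_of_colIdx_eq hds hmono hin (hbound _ (by omega))
      (by ext; simp [colIdx]; omega) (hwit hi hin)
  have hrows : rowIdx n (Icc i n) {j} ⊆ rowIdx n (Icc j n) {j} := fun r hr => by
    simp only [mem_rowIdx_Icc, mem_singleton] at hr ⊢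
    omega
  have hcols : colIdx (Icc i n) {j} = colIdx (Icc j n) {j} := by
    ext; simp [colIdx]; omega
  have hsource : (0 : ℕ) ∈ colIdx (Icc j n) {j} := mem_insert_self _ _
  have hspan : fRank n η ℓ (Icc j n) {j} =
      (transferMatrix η ℓ (rowIdx n (Icc j n) {j}) {0}).rank := by
    rw [← h2, rank_transferMatrix_rowIdx_source hds hmono (by omega) (hbound _ (by omega))
      (hwit hj1 (by omega))]
  rw [fRank_eq_rank_transferMatrix, hcols, rank_transferMatrix_eq_of_subset hrows hsource hspan,
    rank_transferMatrix_rowIdx_source hds hmono hin (hbound _ (by omega)) (hwit hi hin)]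

end Relays

theorem Pmat_apply_eq_apply_last (n η : ℕ) (ℓ : ℕ → ℕ → ℕ) {j : ℕ} (hj1 : 1 ≤ j) (hjn : j ≤ n)
    (h : ∀ i, 1 ≤ i → i ≤ n + 1 → fRank n η ℓ (Icc i n) {j} = fRank n η ℓ (Icc i n) ∅)
    (r : Fin (n + 2)) : Pmat n η ℓ r (j : Fin (n + 2)) = Pmat n η ℓ r (Fin.last (n + 1)) := by
  have hj : ((j : Fin (n + 2)) : ℕ) = j := Fin.val_cast_of_lt (by omega)
  simp only [Pmat, Matrix.of_apply, hj, Fin.val_last, if_neg (show j ≠ 0 by omega),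
    if_neg (show n + 1 ≠ 0 by omega), if_neg (show j ≠ n + 1 by omega)]
  split_ifs with hr
  · rfl
  · rw [h r (by omega) (by omega)]

theorem stmt19_general (n η : ℕ) (ℓ : ℕ → ℕ → ℕ)
    (hbound : ∀ i ≤ n, ∀ j ≤ n, ℓ i j ≤ η)
    (hds : ℓ 0 0 = 0)
    (hmono : ∀ i j, 1 ≤ i → i ≤ j → j ≤ n → ℓ i 0 ≤ ℓ j 0)
    (j : ℕ) (hj1 : 1 ≤ j) (hjn : j ≤ n)
    (h1 : ℓ j 0 = ℓ (j - 1) 0)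
    (h2 : ℓ (j - 1) 0 = fRank n η ℓ (Finset.Icc j n) {j}) :
    (∀ i : ℕ, 1 ≤ i → i ≤ n + 1 →
        fRank n η ℓ (Finset.Icc i n) {j} = ℓ (i - 1) 0 ∧
        ℓ (i - 1) 0 = fRank n η ℓ (Finset.Icc i n) ∅) ∧
      ∀ r : Fin (n + 2), Pmat n η ℓ r (j : Fin (n + 2)) = Pmat n η ℓ r (Fin.last (n + 1)) := by
  have hsource : ∀ i ≤ n, ℓ i 0 ≤ η := fun i hi => hbound i hi 0 (Nat.zero_le n)
  have hcols : ∀ i, 1 ≤ i → i ≤ n + 1 →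
      fRank n η ℓ (Icc i n) {j} = ℓ (i - 1) 0 ∧ ℓ (i - 1) 0 = fRank n η ℓ (Icc i n) ∅ :=
    fun i hi hin =>
      ⟨fRank_Icc_singleton hds hmono hsource hj1 hjn h1 h2 hi hin,
        (fRank_Icc_empty hds hmono hi hin (hsource _ (by omega))).symm⟩
  exact ⟨hcols, Pmat_apply_eq_apply_last n η ℓ hj1 hjn fun i hi hin =>
    (hcols i hi hin).1.trans (hcols i hi hin).2⟩

theorem stmt19 (n η : ℕ) (hn : 1 ≤ n) (hη : 1 ≤ η) (ℓ : ℕ → ℕ → ℕ)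
    (hbound : ∀ i ≤ n, ∀ j ≤ n, ℓ i j ≤ η)
    (hds : ℓ 0 0 = 0) (hii : ∀ i, 1 ≤ i → i ≤ n → ℓ i i = 0)
    (hmono : ∀ i j, 1 ≤ i → i ≤ j → j ≤ n → ℓ i 0 ≤ ℓ j 0)
    (j : ℕ) (hj1 : 1 ≤ j) (hjn : j ≤ n)
    (h1 : ℓ j 0 = ℓ (j - 1) 0)
    (h2 : ℓ (j - 1) 0 = fRank n η ℓ (Finset.Icc j n) {j}) :
    (∀ i : ℕ, 1 ≤ i → i ≤ n + 1 →
        fRank n η ℓ (Finset.Icc i n) {j} = ℓ (i - 1) 0 ∧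
        ℓ (i - 1) 0 = fRank n η ℓ (Finset.Icc i n) ∅) ∧
      ∀ r : Fin (n + 2), Pmat n η ℓ r (j : Fin (n + 2)) = Pmat n η ℓ r (Fin.last (n + 1)) :=
  stmt19_general n η ℓ hbound hds hmono j hj1 hjn h1 h2
end
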